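/- arXiv:1310.5957 — 2 statements merged into one kernel-verified Lean document; each statement's English description precedes it below -/
import Mathlib

section
/- Let f and g be polymatroids on N with g modular, and let i ∈ N. If f({j}) ≤ g({j}) for all j ∈ N∖{i}, then for every I ⊆ N∖{i}: f∗g(I) = f(I), and f∗g({i}∪I) = min{ f(I)+g({i}), f({i}∪I) }. -/
open Finset

variable {α : Type*} [DecidableEq α]

/-- A polymatroid rank function on the ground set `N`. -/
def IsPolymatroid (N : Finset α) (f : Finset α → ℝ) : Prop :=
  f ∅ = 0 ∧
  (∀ I J : Finset α, I ⊆ J → J ⊆ N → f I ≤ f J) ∧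
  (∀ I J : Finset α, I ⊆ N → J ⊆ N → f (I ∪ J) + f (I ∩ J) ≤ f I + f J)

/-- A modular set function on `N`. -/
def IsModular (N : Finset α) (g : Finset α → ℝ) : Prop :=
  ∀ I : Finset α, I ⊆ N → g I = ∑ i ∈ I, g {i}

/-- A tight set function on `N`. -/
def IsTight (N : Finset α) (g : Finset α → ℝ) : Prop :=
  ∀ i ∈ N, g N = g (N \ {i})

/-- The convolution `f ∗ g` of two set functions. -/
noncomputable def conv (f g : Finset α → ℝ) (I : Finset α) : ℝ :=
  I.powerset.inf' (Finset.powerset_nonempty I) (fun J => f J + g (I \ J))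

/-! Off `i`, the singleton values of `f` are dominated by those of the modular `g`, so by
subadditivity of `f` no split `J ⊆ I` can beat `f I` itself: `f I ≤ f J + g (I \ J)`. On
`insert i I` the only remaining question is whether `i` is charged to `f` or to `g`, which gives
the two candidates `f (insert i I)` and `f I + g {i}`. -/

namespace IsPolymatroid

variable {N : Finset α} {f : Finset α → ℝ}

lemma nonneg (hf : IsPolymatroid N f) {I : Finset α} (hI : I ⊆ N) : 0 ≤ f I :=
  hf.1 ▸ hf.2.1 ∅ I (empty_subset I) hI

lemma union_le_add (hf : IsPolymatroid N f) {I J : Finset α} (hI : I ⊆ N) (hJ : J ⊆ N) :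
    f (I ∪ J) ≤ f I + f J := by
  linarith [hf.2.2 I J hI hJ, hf.nonneg ((inter_subset_left : I ∩ J ⊆ I).trans hI)]

lemma union_le_add_sum_singleton (hf : IsPolymatroid N f) {J : Finset α} (hJ : J ⊆ N) :
    ∀ {K : Finset α}, K ⊆ N → f (J ∪ K) ≤ f J + ∑ k ∈ K, f {k} := by
  intro K
  induction K using Finset.induction with
  | empty => simp
  | @insert a K haK ih =>
    intro hK
    obtain ⟨haN, hKN⟩ := insert_subset_iff.mp hK
    have hstep := hf.union_le_add (union_subset hJ hKN) (singleton_subset_iff.mpr haN)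
    rw [union_assoc, union_singleton] at hstep
    rw [sum_insert haK]
    linarith [ih hKN]

end IsPolymatroid

lemma IsModular.insert {N : Finset α} {g : Finset α → ℝ} (hg : IsModular N g) {a : α}
    {K : Finset α} (ha : a ∉ K) (hK : insert a K ⊆ N) : g (insert a K) = g {a} + g K := by
  rw [hg _ hK, sum_insert ha, hg K ((subset_insert a K).trans hK)]

lemma IsPolymatroid.le_add_sdiff_of_dominated {N : Finset α} {f g : Finset α → ℝ}
    (hf : IsPolymatroid N f) (hg : IsModular N g) {J A : Finset α} (hJA : J ⊆ A) (hA : A ⊆ N)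
    (hdom : ∀ k ∈ A \ J, f {k} ≤ g {k}) : f A ≤ f J + g (A \ J) := by
  have hAJ : A \ J ⊆ N := sdiff_subset.trans hA
  calc f A = f (J ∪ A \ J) := by rw [union_sdiff_of_subset hJA]
    _ ≤ f J + ∑ k ∈ A \ J, f {k} := hf.union_le_add_sum_singleton (hJA.trans hA) hAJ
    _ ≤ f J + g (A \ J) := by rw [hg _ hAJ]; gcongr with k hk; exact hdom k hk

section conv

variable {f g : Finset α → ℝ} {I : Finset α}

lemma conv_le {J : Finset α} (hJ : J ⊆ I) : conv f g I ≤ f J + g (I \ J) :=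
  inf'_le (fun J => f J + g (I \ J)) (mem_powerset.mpr hJ)

lemma conv_le_self (hg : g ∅ = 0) : conv f g I ≤ f I := by
  simpa [hg] using conv_le (f := f) (g := g) (subset_refl I)

lemma le_conv {c : ℝ} (h : ∀ J ⊆ I, c ≤ f J + g (I \ J)) : c ≤ conv f g I :=
  le_inf' _ _ fun J hJ => h J (mem_powerset.mp hJ)

end conv

theorem conv_eq_off_elem_general (N : Finset α) (f g : Finset α → ℝ)
    (hf : IsPolymatroid N f) (hgm : IsModular N g)
    (i : α) (hi : i ∈ N) (hdom : ∀ j ∈ N \ {i}, f {j} ≤ g {j}) :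
    ∀ I ⊆ N \ {i},
      conv f g I = f I ∧
      conv f g (insert i I) = min (f I + g {i}) (f (insert i I)) := by
  intro I hI
  have hIN : I ⊆ N := hI.trans sdiff_subset
  have hiI : i ∉ I := fun h => (mem_sdiff.mp (hI h)).2 (mem_singleton_self i)
  have hg0 : g ∅ = 0 := by simpa using hgm ∅ (empty_subset N)
  have split_le {J A : Finset α} (hJA : J ⊆ A) (hA : A ⊆ N) (hAJ : A \ J ⊆ I) :
      f A ≤ f J + g (A \ J) :=
    hf.le_add_sdiff_of_dominated hgm hJA hA fun k hk => hdom k (hI (hAJ hk))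
  refine ⟨(conv_le_self hg0).antisymm (le_conv fun J hJ => split_le hJ hIN sdiff_subset), ?_⟩
  refine le_antisymm (le_min (by simpa [hiI] using conv_le (subset_insert i I))
    (conv_le_self hg0)) (le_conv fun J hJ => ?_)
  by_cases hiJ : i ∈ J
  · have hAJ : insert i I \ J ⊆ I := by rw [insert_sdiff_of_mem I hiJ]; exact sdiff_subset
    exact (min_le_right _ _).trans (split_le hJ (insert_subset hi hIN) hAJ)
  · have hJI : J ⊆ I := (subset_insert_iff_of_notMem hiJ).mp hJ
    rw [insert_sdiff_of_notMem I hiJ,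
      hgm.insert (fun h => hiI (sdiff_subset h)) (insert_subset hi (sdiff_subset.trans hIN))]
    linarith [split_le hJI hIN sdiff_subset, min_le_left (f I + g {i}) (f (insert i I))]

theorem conv_eq_off_elem (N : Finset α) (f g : Finset α → ℝ)
    (hf : IsPolymatroid N f) (hg : IsPolymatroid N g) (hgm : IsModular N g)
    (i : α) (hi : i ∈ N) (hdom : ∀ j ∈ N \ {i}, f {j} ≤ g {j}) :
    ∀ I ⊆ N \ {i},
      conv f g I = f I ∧
      conv f g (insert i I) = min (f I + g {i}) (f (insert i I)) :=
  conv_eq_off_elem_general N f g hf hgm i hi hdom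
end

section
/- The tight polymatroids on N form a linear subspace of ℝ^{𝒫(N)} (closed under nonnegative combinations and whose difference space intersects the modular polymatroids' difference space only in 0), so that the cone of all polymatroids is the direct sum H_N = H_N^ti ⊕ H_N^mod. -/
open Finset

variable {α : Type*} [DecidableEq α]

/-!
A polymatroid `h` splits as `h = h^ti + h^mod`, where `h^mod` is the modular function with
`h^mod {i} = h N - h (N ∖ {i})`. Submodularity makes this marginal value at the top the smallest
marginal value of `i`, so `h^ti = h - h^mod` stays monotone, and it is tight by construction.
Uniqueness holds because a tight function contributes nothing to `h N - h (N ∖ {i})`, while a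
modular one contributes its value on `{i}`.
-/

section Cone

variable {N : Finset α} {f g : Finset α → ℝ}

theorem IsPolymatroid.nonneg_combination {a b : ℝ} (ha : 0 ≤ a) (hb : 0 ≤ b)
    (hf : IsPolymatroid N f) (hg : IsPolymatroid N g) :
    IsPolymatroid N (fun I => a * f I + b * g I) := by
  obtain ⟨hf0, hfmono, hfsub⟩ := hf
  obtain ⟨hg0, hgmono, hgsub⟩ := hg
  refine ⟨by simp [hf0, hg0], fun I J hIJ hJ => ?_, fun I J hI hJ => ?_⟩
  · have := mul_le_mul_of_nonneg_left (hfmono I J hIJ hJ) ha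
    have := mul_le_mul_of_nonneg_left (hgmono I J hIJ hJ) hb
    linarith
  · have := mul_le_mul_of_nonneg_left (hfsub I J hI hJ) ha
    have := mul_le_mul_of_nonneg_left (hgsub I J hI hJ) hb
    linarith

theorem IsTight.linear_combination (a b : ℝ) (hf : IsTight N f) (hg : IsTight N g) :
    IsTight N (fun I => a * f I + b * g I) := fun i hi => by
  simp only [hf i hi, hg i hi]

end Cone

section Modular

variable {N : Finset α}

theorem sum_sub_sum_sdiff_singleton (w : α → ℝ) {i : α} (hi : i ∈ N) :
    ∑ j ∈ N, w j - ∑ j ∈ N \ {i}, w j = w i := by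
  rw [← sum_sdiff (singleton_subset_iff.mpr hi), sum_singleton]
  ring

omit [DecidableEq α] in
theorem isModular_sum (w : α → ℝ) : IsModular N (fun I => ∑ i ∈ I, w i) := fun I _ => by
  simp

theorem isPolymatroid_sum {w : α → ℝ} (hw : ∀ i ∈ N, 0 ≤ w i) :
    IsPolymatroid N (fun I => ∑ i ∈ I, w i) :=
  ⟨sum_empty, fun _ _ hIJ hJ => sum_le_sum_of_subset_of_nonneg hIJ fun i hi _ => hw i (hJ hi),
    fun _ _ _ _ => sum_union_inter.le⟩

theorem IsModular.sub_sdiff_singleton {g : Finset α → ℝ} (hg : IsModular N g) {i : α}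
    (hi : i ∈ N) : g N - g (N \ {i}) = g {i} := by
  rw [hg N subset_rfl, hg (N \ {i}) sdiff_subset]
  exact sum_sub_sum_sdiff_singleton (fun j => g {j}) hi

theorem IsModular.eq_zero_of_isTight {g : Finset α → ℝ} (hg : IsModular N g)
    (ht : IsTight N g) : ∀ I ⊆ N, g I = 0 := by
  intro I hI
  have hsingleton : ∀ i ∈ N, g {i} = 0 := fun i hi => by
    rw [← hg.sub_sdiff_singleton hi, ht i hi, sub_self]
  rw [hg I hI]
  exact sum_eq_zero fun i hi => hsingleton i (hI hi)

end Modular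

noncomputable def modularPart (N : Finset α) (h : Finset α → ℝ) (I : Finset α) : ℝ :=
  ∑ i ∈ I, (h N - h (N \ {i}))

noncomputable def tightPart (N : Finset α) (h : Finset α → ℝ) (I : Finset α) : ℝ :=
  h I - modularPart N h I

theorem isTight_tightPart (N : Finset α) (h : Finset α → ℝ) : IsTight N (tightPart N h) :=
  fun i hi => by
    have := sum_sub_sum_sdiff_singleton (fun j => h N - h (N \ {j})) hi
    simp only [tightPart, modularPart] at this ⊢
    linarith

namespace IsPolymatroid

variable {N : Finset α} {h : Finset α → ℝ}

theorem sub_sdiff_singleton_le_insert_sub (hp : IsPolymatroid N h) {A : Finset α} {i : α}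
    (hA : A ⊆ N) (hi : i ∈ N) (hiA : i ∉ A) :
    h N - h (N \ {i}) ≤ h (insert i A) - h A := by
  have hsub := hp.2.2 (insert i A) (N \ {i}) (insert_subset hi hA) sdiff_subset
  have hunion : insert i A ∪ N \ {i} = N := by
    ext x
    simp only [mem_union, mem_insert, mem_sdiff, mem_singleton]
    grind
  have hinter : insert i A ∩ (N \ {i}) = A := by
    ext x
    simp only [mem_inter, mem_insert, mem_sdiff, mem_singleton]
    grind
  rw [hunion, hinter] at hsub
  linarith

theorem sum_sub_sdiff_singleton_le_sub (hp : IsPolymatroid N h) {I J : Finset α}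
    (hIJ : I ⊆ J) (hJ : J ⊆ N) :
    ∑ i ∈ J \ I, (h N - h (N \ {i})) ≤ h J - h I := by
  suffices key : ∀ K ⊆ N \ I, ∑ i ∈ K, (h N - h (N \ {i})) ≤ h (I ∪ K) - h I by
    simpa [union_sdiff_of_subset hIJ] using key (J \ I) (sdiff_subset_sdiff hJ subset_rfl)
  intro K
  induction K using Finset.induction_on with
  | empty => simp
  | insert i K hiK ih =>
    intro hK
    obtain ⟨hiN, hiI⟩ := mem_sdiff.mp (hK (mem_insert_self i K))
    have hstep := hp.sub_sdiff_singleton_le_insert_sub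
      (union_subset (hIJ.trans hJ) ((subset_insert i K).trans hK |>.trans sdiff_subset))
      hiN (by simp [hiI, hiK])
    rw [sum_insert hiK, union_insert]
    linarith [ih ((subset_insert i K).trans hK)]

theorem isPolymatroid_modularPart (hp : IsPolymatroid N h) :
    IsPolymatroid N (modularPart N h) :=
  isPolymatroid_sum fun _ _ => sub_nonneg.mpr (hp.2.1 _ N sdiff_subset subset_rfl)

theorem isPolymatroid_tightPart (hp : IsPolymatroid N h) : IsPolymatroid N (tightPart N h) := by
  refine ⟨by simp [tightPart, modularPart, hp.1], fun I J hIJ hJ => ?_, fun I J hI hJ => ?_⟩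
  · have hsplit := sum_sdiff hIJ (f := fun i => h N - h (N \ {i}))
    have := hp.sum_sub_sdiff_singleton_le_sub hIJ hJ
    simp only [tightPart, modularPart]
    linarith
  · have hmod : modularPart N h (I ∪ J) + modularPart N h (I ∩ J) =
        modularPart N h I + modularPart N h J := sum_union_inter
    have := hp.2.2 I J hI hJ
    simp only [tightPart]
    linarith

end IsPolymatroid

theorem IsModular.eq_modularPart_of_isTight_add {N : Finset α} {f g h : Finset α → ℝ}
    (hf : IsTight N f) (hg : IsModular N g) (hfg : ∀ I ⊆ N, h I = f I + g I) :
    ∀ I ⊆ N, g I = modularPart N h I := by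
  intro I hI
  rw [hg I hI, modularPart]
  refine sum_congr rfl fun i hi => ?_
  have hiN := hI hi
  rw [← hg.sub_sdiff_singleton hiN, hfg N subset_rfl, hfg _ sdiff_subset, hf i hiN]
  ring

theorem tight_mod_direct_sum (N : Finset α) :
    (∀ f g : Finset α → ℝ, ∀ a b : ℝ, 0 ≤ a → 0 ≤ b →
      IsPolymatroid N f → IsTight N f → IsPolymatroid N g → IsTight N g →
      IsPolymatroid N (fun I => a * f I + b * g I) ∧
        IsTight N (fun I => a * f I + b * g I)) ∧
    (∀ f : Finset α → ℝ, IsTight N f → IsModular N f → ∀ I ⊆ N, f I = 0) ∧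
    (∀ h : Finset α → ℝ, IsPolymatroid N h →
      ∃ f g : Finset α → ℝ,
        (IsPolymatroid N f ∧ IsTight N f) ∧ (IsPolymatroid N g ∧ IsModular N g) ∧
        (∀ I ⊆ N, h I = f I + g I) ∧
        (∀ f' g' : Finset α → ℝ,
          IsPolymatroid N f' → IsTight N f' → IsPolymatroid N g' → IsModular N g' →
          (∀ I ⊆ N, h I = f' I + g' I) →
          ∀ I ⊆ N, f' I = f I ∧ g' I = g I)) := by
  refine ⟨fun f g a b ha hb hf hft hg hgt =>
      ⟨hf.nonneg_combination ha hb hg, hft.linear_combination a b hgt⟩,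
    fun f ht hm => hm.eq_zero_of_isTight ht, fun h hp => ?_⟩
  refine ⟨tightPart N h, modularPart N h, ⟨hp.isPolymatroid_tightPart, isTight_tightPart N h⟩,
    ⟨hp.isPolymatroid_modularPart, isModular_sum _⟩, fun I _ => by simp [tightPart],
    fun f' g' _ hf' _ hg' hfg I hI => ?_⟩
  have hg'I := hg'.eq_modularPart_of_isTight_add hf' hfg I hI
  refine ⟨?_, hg'I⟩
  rw [tightPart, ← hg'I, hfg I hI]
  ring
end
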